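/- Let (M,d) be a separable pointed metric space, and let (sₙ)ₙ∈ℕ be a one-to-one sequence of points of M with s₁ = 0_M whose set of terms is dense in M. Suppose there exists a sequence of maps (rₙ)ₙ∈ℕ such that for every n ∈ ℕ: (i) rₙ : M → M is a 1-Lipschitz retraction onto {s₁, …, sₙ} (i.e., rₙ(M) = {s₁,…,sₙ} and rₙ is the identity on this set), and (ii) rₙ ∘ r_{n+1} = rₙ. Then the Lipschitz-free space F(M) has a monotone Schauder basis. -/

import Mathlib

open scoped NNReal ENNReal
open Metric Filter

noncomputable section

/-- The space `Lip₀(M)` of real-valued Lipschitz functions on `M` vanishing at the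
distinguished point `base`, as a submodule of `M → ℝ`. -/
def LipZero (M : Type*) [MetricSpace M] (base : M) : Submodule ℝ (M → ℝ) where
  carrier := {f | MemHolder 1 f ∧ f base = 0}
  add_mem' := fun hf hg => ⟨hf.1.add hg.1, by simp [hf.2, hg.2]⟩
  zero_mem' := ⟨memHolder_zero, rfl⟩
  smul_mem' := fun c f hf => ⟨hf.1.smul, by simp [hf.2]⟩

variable {M : Type*} [MetricSpace M] {base : M}

lemma LipZero.memHolder (f : LipZero M base) : MemHolder 1 (f : M → ℝ) := f.2.1

lemma LipZero.base_eq_zero (f : LipZero M base) : (f : M → ℝ) base = 0 := f.2.2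

lemma LipZero.lipschitzWith (f : LipZero M base) :
    LipschitzWith (nnHolderNorm 1 (f : M → ℝ)) (f : M → ℝ) :=
  holderWith_one.mp f.2.1.holderWith

/-- The norm on `Lip₀(M)`: the optimal Lipschitz constant. -/
noncomputable instance LipZero.normedAddCommGroup : NormedAddCommGroup (LipZero M base) :=
  AddGroupNorm.toNormedAddCommGroup
    { toFun := fun f => nnHolderNorm 1 (f : M → ℝ)
      map_zero' := by simp
      add_le' := fun f g => by
        have := (LipZero.memHolder f).nnHolderNorm_add_le (LipZero.memHolder g)
        exact_mod_cast this
      neg' := fun f => by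
        show (nnHolderNorm 1 ((-f : LipZero M base) : M → ℝ) : ℝ) = _
        have h : ((-f : LipZero M base) : M → ℝ) = (-1 : ℝ) • (f : M → ℝ) := by
          simp
        rw [h, (LipZero.memHolder f).nnHolderNorm_smul ((-1 : ℝ))]
        simp
      eq_zero_of_map_eq_zero' := fun f hf => by
        have hf' : (nnHolderNorm 1 (f : M → ℝ) : ℝ) = 0 := hf
        have h0 : nnHolderNorm 1 (f : M → ℝ) = 0 := by exact_mod_cast hf'
        have hconst := ((LipZero.memHolder f).nnHolderNorm_eq_zero).mp h0
        have : ∀ x, (f : M → ℝ) x = 0 := fun x =>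
          (hconst x base).trans (LipZero.base_eq_zero f)
        exact Subtype.ext (funext this) }

lemma LipZero.norm_def (f : LipZero M base) :
    ‖f‖ = (nnHolderNorm 1 (f : M → ℝ) : ℝ) := rfl

noncomputable instance LipZero.normedSpace : NormedSpace ℝ (LipZero M base) where
  norm_smul_le c f := by
    have : ((c • f : LipZero M base) : M → ℝ) = c • (f : M → ℝ) := rfl
    rw [LipZero.norm_def, LipZero.norm_def, this, (LipZero.memHolder f).nnHolderNorm_smul c]
    push_cast
    simp [norm_smul]

lemma LipZero.dist_le (f : LipZero M base) (x y : M) :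
    dist ((f : M → ℝ) x) ((f : M → ℝ) y) ≤ ‖f‖ * dist x y :=
  (LipZero.lipschitzWith f).dist_le_mul x y

/-- The topological dual of a normed space (old Mathlib `NormedSpace.Dual`, removed upstream);
the topology on `E` is the one coming from its norm. -/
abbrev NormedSpace.Dual (𝕜 : Type*) [NontriviallyNormedField 𝕜] (E : Type*)
    [SeminormedAddCommGroup E] [NormedSpace 𝕜 E] : Type _ :=
  E →L[𝕜] 𝕜

variable (M base) in
/-- The Dirac map `δ : M → Lip₀(M)*`. -/
noncomputable def freeDelta (x : M) : NormedSpace.Dual ℝ (LipZero M base) :=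
  LinearMap.mkContinuous
    { toFun := fun f => (f : M → ℝ) x
      map_add' := fun f g => rfl
      map_smul' := fun c f => rfl }
    (dist x base)
    (fun f => by
      have h := LipZero.dist_le f x base
      rw [LipZero.base_eq_zero f, dist_zero_right] at h
      simpa [mul_comm] using h)

variable (M base) in
/-- The Lipschitz-free space `F(M)`: the closed linear span of the Dirac measures
inside `Lip₀(M)*`. -/
noncomputable def FreeSpace : Submodule ℝ (NormedSpace.Dual ℝ (LipZero M base)) :=
  (Submodule.span ℝ (Set.range (freeDelta M base))).topologicalClosure

variable (M base) in
/-- The Dirac map, viewed as a map into the free space `F(M)`. -/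
noncomputable def freeDeltaF (x : M) : FreeSpace M base :=
  ⟨freeDelta M base x,
    Submodule.le_topologicalClosure _ (Submodule.subset_span ⟨x, rfl⟩)⟩

instance : CompleteSpace (FreeSpace M base) :=
  Submodule.topologicalClosure.completeSpace _


/-- `c` represents `x` in terms of the sequence `e`: the partial sums `∑_{i<n} cᵢ eᵢ`
converge to `x`. -/
def IsSchauderRep {X : Type*} [NormedAddCommGroup X] [NormedSpace ℝ X]
    (e : ℕ → X) (x : X) (c : ℕ → ℝ) : Prop :=
  Filter.Tendsto (fun n => ∑ i ∈ Finset.range n, c i • e i) Filter.atTop (nhds x)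

/-- `X` has a monotone Schauder basis: a (finite or infinite) sequence `e` such that every
`x ∈ X` is uniquely represented as `x = ∑ᵢ cᵢ eᵢ`, and all the canonical projections
(partial-sum operators) have norm at most `1`. -/
def HasMonotoneSchauderBasis (X : Type*) [NormedAddCommGroup X] [NormedSpace ℝ X] : Prop :=
  (∃ (d : ℕ) (e : Fin d → X),
      (∀ x : X, ∃! c : Fin d → ℝ, x = ∑ i, c i • e i) ∧
      (∀ (x : X) (c : Fin d → ℝ), x = ∑ i, c i • e i →
        ∀ n : ℕ, ‖∑ i ∈ Finset.univ.filter (fun i : Fin d => (i : ℕ) < n), c i • e i‖ ≤ ‖x‖)) ∨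
  (∃ e : ℕ → X,
      (∀ x : X, ∃! c : ℕ → ℝ, IsSchauderRep e x c) ∧
      (∀ (x : X) (c : ℕ → ℝ), IsSchauderRep e x c →
        ∀ n : ℕ, ‖∑ i ∈ Finset.range n, c i • e i‖ ≤ ‖x‖))

/-!
The retractions induce norm-one operators `Qₙ` on `F(M)` with `Qₙ δ(x) = δ(rₙ x)`. Since
`rₘ ∘ rₙ = r_{min m n}`, these are commuting projections with `Qₘ Qₙ = Q_{min m n}` and
`Q₀ = 0`, and since `rₙ → id` pointwise (the `sₙ` are dense and fixed from some index on), the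
uniformly bounded `Qₙ` converge strongly to the identity. The increment `Q_{k+1} - Q_k` has
one-dimensional range, spanned by `δ(s_{k+1}) - δ(r_k s_{k+1}) ≠ 0`; these vectors form a
Schauder basis whose partial-sum projections are the `Qₙ`, hence monotone.
-/

open scoped Topology

/-- `LipZero M base` is a subtype of `M → ℝ`, from which it would otherwise inherit the
topology of pointwise convergence rather than its norm topology. -/
instance (priority := high) LipZero.topologicalSpace : TopologicalSpace (LipZero M base) :=
  PseudoMetricSpace.toUniformSpace.toTopologicalSpace

lemma LipZero.norm_le_of_lipschitzWith (f : LipZero M base) {K : ℝ≥0}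
    (hf : LipschitzWith K (f : M → ℝ)) : ‖f‖ ≤ K := by
  rw [LipZero.norm_def]
  exact_mod_cast (holderWith_one.mpr hf).nnholderNorm_le

lemma freeDelta_apply (x : M) (f : LipZero M base) : freeDelta M base x f = (f : M → ℝ) x :=
  rfl

lemma lipschitzWith_freeDelta : LipschitzWith 1 (freeDelta M base) :=
  LipschitzWith.of_dist_le_mul fun x y => by
    rw [dist_eq_norm, NNReal.coe_one, one_mul]
    refine ContinuousLinearMap.opNorm_le_bound _ dist_nonneg fun f => ?_
    simpa [freeDelta_apply, ← Real.dist_eq, mul_comm] using LipZero.dist_le f x y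

lemma freeDelta_injective : Function.Injective (freeDelta M base) := by
  intro x y hxy
  have hg : LipschitzWith 1 (fun z : M => dist z y - dist base y) := by
    simpa using (LipschitzWith.dist_left y).sub (LipschitzWith.const (dist base y))
  let g : LipZero M base := ⟨_, (holderWith_one.mpr hg).memHolder, sub_self _⟩
  have hxy_g : dist x y - dist base y = dist y y - dist base y := congrArg (· g) hxy
  simpa using hxy_g

lemma freeDeltaF_injective : Function.Injective (freeDeltaF M base) :=
  fun _ _ h => freeDelta_injective (congrArg Subtype.val h)

lemma continuous_freeDeltaF : Continuous (freeDeltaF M base) :=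
  lipschitzWith_freeDelta.continuous.subtype_mk _

lemma freeDeltaF_base : freeDeltaF M base base = 0 :=
  Subtype.ext (ContinuousLinearMap.ext LipZero.base_eq_zero)

lemma dense_span_freeDeltaF :
    Dense (Submodule.span ℝ (Set.range (freeDeltaF M base)) : Set (FreeSpace M base)) := by
  intro x
  rw [closure_subtype, ← Submodule.coe_subtype, ← Submodule.map_coe, Submodule.map_span,
    ← Set.range_comp]
  exact x.2

lemma FreeSpace.apply_mem_of_forall_freeDeltaF {E : Type*} [TopologicalSpace E]
    [AddCommMonoid E] [Module ℝ E] (T : FreeSpace M base →L[ℝ] E) {S : Submodule ℝ E}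
    (hS : IsClosed (S : Set E)) (h : ∀ x, T (freeDeltaF M base x) ∈ S) (z : FreeSpace M base) :
    T z ∈ S := by
  have hspan : Submodule.span ℝ (Set.range (freeDeltaF M base)) ≤ S.comap (T : _ →ₗ[ℝ] E) :=
    Submodule.span_le.mpr (Set.range_subset_iff.mpr h)
  exact (hS.preimage T.continuous).closure_subset_iff.mpr hspan (dense_span_freeDeltaF z)

lemma FreeSpace.continuousLinearMap_ext {E : Type*} [TopologicalSpace E] [AddCommMonoid E]
    [Module ℝ E] [T2Space E] {S T : FreeSpace M base →L[ℝ] E}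
    (h : ∀ x, S (freeDeltaF M base x) = T (freeDeltaF M base x)) : S = T :=
  ContinuousLinearMap.ext_on dense_span_freeDeltaF (by rintro _ ⟨x, rfl⟩; exact h x)

def LipZero.precomp (ρ : M → M) {K : ℝ≥0} (hρ : LipschitzWith K ρ) (hb : ρ base = base) :
    LipZero M base →L[ℝ] LipZero M base :=
  LinearMap.mkContinuous
    { toFun := fun f => ⟨(f : M → ℝ) ∘ ρ,
        (holderWith_one.mpr ((LipZero.lipschitzWith f).comp hρ)).memHolder,
        by simp [hb, LipZero.base_eq_zero f]⟩
      map_add' := fun _ _ => rfl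
      map_smul' := fun _ _ => rfl }
    K fun f => by
      have hf : LipschitzWith _ ((f : M → ℝ) ∘ ρ) := (LipZero.lipschitzWith f).comp hρ
      refine (LipZero.norm_le_of_lipschitzWith _ hf).trans ?_
      rw [NNReal.coe_mul, ← LipZero.norm_def, mul_comm]

lemma FreeSpace.comp_precomp_mem (ρ : M → M) {K : ℝ≥0} (hρ : LipschitzWith K ρ)
    (hb : ρ base = base) {φ : NormedSpace.Dual ℝ (LipZero M base)}
    (hφ : φ ∈ FreeSpace M base) : φ.comp (LipZero.precomp ρ hρ hb) ∈ FreeSpace M base := by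
  set T := (ContinuousLinearMap.compL ℝ (LipZero M base) (LipZero M base) ℝ).flip
    (LipZero.precomp ρ hρ hb)
  have hdelta : ∀ x, T (freeDelta M base x) = freeDelta M base (ρ x) :=
    fun _ => ContinuousLinearMap.ext fun _ => rfl
  have hspan : Submodule.span ℝ (Set.range (freeDelta M base)) ≤
      (FreeSpace M base).comap (T : _ →ₗ[ℝ] _) :=
    Submodule.span_le.mpr <| Set.range_subset_iff.mpr fun x => by
      rw [SetLike.mem_coe, Submodule.mem_comap, ContinuousLinearMap.coe_coe, hdelta]
      exact (freeDeltaF M base (ρ x)).2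
  exact Submodule.topologicalClosure_minimal _ hspan
    ((Submodule.isClosed_topologicalClosure _).preimage T.continuous) hφ

def FreeSpace.map (ρ : M → M) {K : ℝ≥0} (hρ : LipschitzWith K ρ) (hb : ρ base = base) :
    FreeSpace M base →L[ℝ] FreeSpace M base :=
  ContinuousLinearMap.codRestrict
    (((ContinuousLinearMap.compL ℝ (LipZero M base) (LipZero M base) ℝ).flip
      (LipZero.precomp ρ hρ hb)).comp (FreeSpace M base).subtypeL)
    (FreeSpace M base) fun φ => FreeSpace.comp_precomp_mem ρ hρ hb φ.2

lemma FreeSpace.map_freeDeltaF (ρ : M → M) {K : ℝ≥0} (hρ : LipschitzWith K ρ)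
    (hb : ρ base = base) (x : M) :
    FreeSpace.map ρ hρ hb (freeDeltaF M base x) = freeDeltaF M base (ρ x) :=
  rfl

lemma FreeSpace.norm_map_apply_le (ρ : M → M) {K : ℝ≥0} (hρ : LipschitzWith K ρ)
    (hb : ρ base = base) (φ : FreeSpace M base) : ‖FreeSpace.map ρ hρ hb φ‖ ≤ K * ‖φ‖ :=
  calc ‖(φ : NormedSpace.Dual ℝ (LipZero M base)).comp (LipZero.precomp ρ hρ hb)‖
      ≤ ‖(φ : NormedSpace.Dual ℝ (LipZero M base))‖ * K :=
        (ContinuousLinearMap.opNorm_comp_le _ _).trans <| by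
          gcongr; exact LinearMap.mkContinuous_norm_le _ K.2 _
    _ = K * ‖φ‖ := mul_comm _ _

lemma tendsto_apply_of_dense_span {X ι : Type*} [NormedAddCommGroup X]
    [NormedSpace ℝ X] {l : Filter ι} (Q : ι → X →L[ℝ] X) (hQ : ∀ i x, ‖Q i x‖ ≤ ‖x‖)
    {D : Set X} (hD : Dense (Submodule.span ℝ D : Set X))
    (h : ∀ y ∈ D, Tendsto (fun i => Q i y) l (𝓝 y)) (x : X) :
    Tendsto (fun i => Q i x) l (𝓝 x) := by
  let S : Submodule ℝ X :=
    { carrier := {x | Tendsto (fun i => Q i x) l (𝓝 x)}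
      add_mem' := fun ha hb => by simpa using ha.add hb
      zero_mem' := by simpa using tendsto_const_nhds
      smul_mem' := fun c _ hx => by simpa using hx.const_smul c }
  have hlip : ∀ i, LipschitzWith 1 (Q i) := fun i => by
    simpa using AddMonoidHomClass.lipschitz_of_bound (Q i) 1 (by simpa using hQ i)
  have hS : IsClosed (S : Set X) :=
    (LipschitzWith.uniformEquicontinuous (fun i => ⇑(Q i)) 1 hlip).equicontinuous
      |>.isClosed_setOfPred_tendsto continuous_id
  exact hS.closure_subset_iff.mpr (Submodule.span_le.mpr h) (hD x)

lemma sub_mul_sub_of_mul_eq_min {R : Type*} [Ring R] {q : ℕ → R}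
    (hq : ∀ m n, q m * q n = q (min m n)) (m k : ℕ) :
    (q (m + 1) - q m) * (q (k + 1) - q k) = if m = k then q (k + 1) - q k else 0 := by
  simp only [sub_mul, mul_sub, hq]
  rcases lt_trichotomy m k with h | rfl | h
  · rw [if_neg h.ne, min_eq_left (by omega), min_eq_left (by omega), min_eq_left (by omega),
      min_eq_left h.le]
    abel
  · simp
  · rw [if_neg h.ne', min_eq_right (by omega), min_eq_right (by omega),
      min_eq_right (by omega), min_eq_right h.le]
    abel

lemma IsSchauderRep.map_eq_smul {X : Type*} [NormedAddCommGroup X] [NormedSpace ℝ X]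
    {e : ℕ → X} {x : X} {c : ℕ → ℝ} (h : IsSchauderRep e x c) (P : X →L[ℝ] X) (m : ℕ)
    (hP : ∀ k, P (e k) = if k = m then e k else 0) : P x = c m • e m := by
  refine tendsto_nhds_unique ((P.continuous.tendsto x).comp h) (tendsto_const_nhds.congr' ?_)
  filter_upwards [eventually_gt_atTop m] with n hn
  simp [map_sum, hP, Finset.sum_ite_eq', hn]

lemma hasMonotoneSchauderBasis_of_projections {X : Type*} [NormedAddCommGroup X]
    [NormedSpace ℝ X] (Q : ℕ → X →L[ℝ] X) (e : ℕ → X) (hQ0 : Q 0 = 0)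
    (hnorm : ∀ n x, ‖Q n x‖ ≤ ‖x‖) {D : Set X} (hD : Dense (Submodule.span ℝ D : Set X))
    (htendsto : ∀ y ∈ D, Tendsto (fun n => Q n y) atTop (𝓝 y))
    (hmul : ∀ m n, Q m * Q n = Q (min m n)) (he0 : ∀ k, e k ≠ 0)
    (he : ∀ k, (Q (k + 1) - Q k) (e k) = e k)
    (hrange : ∀ k x, (Q (k + 1) - Q k) x ∈ Submodule.span ℝ {e k}) :
    HasMonotoneSchauderBasis X := by
  have hQe : ∀ m k, (Q (m + 1) - Q m) (e k) = if k = m then e k else 0 := fun m k => by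
    rw [← he k, ← mul_apply_eq_comp, sub_mul_sub_of_mul_eq_min hmul]
    by_cases hkm : k = m
    · simp [hkm]
    · simp [hkm, Ne.symm hkm]
  choose c hc using fun x k => Submodule.mem_span_singleton.mp (hrange k x)
  have hsum : ∀ x n, ∑ i ∈ Finset.range n, c x i • e i = Q n x := fun x n => by
    simp only [hc, sub_apply]
    rw [Finset.sum_range_sub (fun i => Q i x), hQ0, zero_apply, sub_zero]
  have huniq : ∀ x c', IsSchauderRep e x c' → c' = c x := fun x c' h => funext fun m =>
    smul_left_injective ℝ (he0 m) ((h.map_eq_smul _ m (hQe m)).symm.trans (hc x m).symm)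
  refine Or.inr ⟨e, fun x => ⟨c x, ?_, huniq x⟩, fun x c' h n => ?_⟩
  · exact (tendsto_apply_of_dense_span Q hnorm hD htendsto x).congr fun n => (hsum x n).symm
  · rw [huniq x c' h, hsum]
    exact hnorm n x

lemma exists_retraction_eq {α : Type*} {s : ℕ → α} {r : ℕ → α → α}
    (hrange : ∀ n, Set.range (r n) = s '' Set.Iic n) (n : ℕ) (x : α) :
    ∃ j ≤ n, r n x = s j := by
  obtain ⟨j, hj, hjx⟩ : r n x ∈ s '' Set.Iic n := hrange n ▸ Set.mem_range_self x
  exact ⟨j, hj, hjx.symm⟩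

lemma retraction_comp_retraction {α : Type*} {s : ℕ → α} {r : ℕ → α → α}
    (hrange : ∀ n, Set.range (r n) = s '' Set.Iic n)
    (hfix : ∀ n, ∀ k ≤ n, r n (s k) = s k) (hcomp : ∀ n, r n ∘ r (n + 1) = r n)
    (m n : ℕ) (x : α) : r m (r n x) = r (min m n) x := by
  rcases le_total m n with hmn | hnm
  · rw [min_eq_left hmn]
    induction n, hmn using Nat.le_induction generalizing x with
    | base =>
      obtain ⟨j, hj, hx⟩ := exists_retraction_eq hrange m x
      rw [hx, hfix m j hj]
    | succ n _ ih =>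
      rw [← ih (r (n + 1) x), ← Function.comp_apply (f := r n), hcomp, ih]
  · rw [min_eq_right hnm]
    obtain ⟨j, hj, hx⟩ := exists_retraction_eq hrange n x
    rw [hx, hfix m j (hj.trans hnm)]

lemma tendsto_retraction {s : ℕ → M} {r : ℕ → M → M} (hlip : ∀ n, LipschitzWith 1 (r n))
    (hfix : ∀ n, ∀ k ≤ n, r n (s k) = s k) (hdense : DenseRange s) (y : M) :
    Tendsto (fun n => r n y) atTop (𝓝 y) := by
  rw [Metric.tendsto_atTop]
  intro ε hε
  obtain ⟨k, hk⟩ := hdense.exists_dist_lt y (half_pos hε)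
  refine ⟨k, fun n hn => ?_⟩
  have hrk : dist (r n y) (s k) ≤ dist y (s k) := by
    simpa [hfix n k hn] using (hlip n).dist_le_mul y (s k)
  calc dist (r n y) y ≤ dist (r n y) (s k) + dist y (s k) := dist_triangle_right _ _ _
    _ < ε := by linarith

section Retractions

variable {s : ℕ → M} {r : ℕ → M → M} {Q : ℕ → FreeSpace M base →L[ℝ] FreeSpace M base}

lemma FreeSpace.mul_eq_min_of_retractions
    (hQ : ∀ n x, Q n (freeDeltaF M base x) = freeDeltaF M base (r n x))
    (hrange : ∀ n, Set.range (r n) = s '' Set.Iic n)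
    (hfix : ∀ n, ∀ k ≤ n, r n (s k) = s k) (hcomp : ∀ n, r n ∘ r (n + 1) = r n) (m n : ℕ) :
    Q m * Q n = Q (min m n) :=
  FreeSpace.continuousLinearMap_ext fun x => by
    rw [mul_apply_eq_comp, hQ, hQ, hQ, retraction_comp_retraction hrange hfix hcomp]

lemma FreeSpace.eq_zero_of_retraction_zero
    (hQ : ∀ n x, Q n (freeDeltaF M base x) = freeDeltaF M base (r n x))
    (hrange : ∀ n, Set.range (r n) = s '' Set.Iic n) (hs0 : s 0 = base) : Q 0 = 0 :=
  FreeSpace.continuousLinearMap_ext fun x => by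
    obtain ⟨j, hj, hx⟩ := exists_retraction_eq hrange 0 x
    rw [hQ, hx, Nat.le_zero.mp hj, hs0, freeDeltaF_base, zero_apply]

lemma FreeSpace.increment_freeDeltaF_ne_zero
    (hQ : ∀ n x, Q n (freeDeltaF M base x) = freeDeltaF M base (r n x))
    (hrange : ∀ n, Set.range (r n) = s '' Set.Iic n)
    (hfix : ∀ n, ∀ k ≤ n, r n (s k) = s k) (hinj : Function.Injective s) (k : ℕ) :
    (Q (k + 1) - Q k) (freeDeltaF M base (s (k + 1))) ≠ 0 := by
  obtain ⟨j, hj, hx⟩ := exists_retraction_eq hrange k (s (k + 1))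
  rw [sub_apply, hQ, hQ, hfix _ _ le_rfl, hx, sub_ne_zero, Ne,
    freeDeltaF_injective.eq_iff, hinj.eq_iff]
  omega

/-- `Q_{k+1} - Q_k` kills `δ(s j)` for `j ≤ k`, and `Q_{k+1}` maps every `δ(y)` to some `δ(s j)`
with `j ≤ k + 1`. -/
lemma FreeSpace.increment_mem_span
    (hQ : ∀ n x, Q n (freeDeltaF M base x) = freeDeltaF M base (r n x))
    (hmul : ∀ m n, Q m * Q n = Q (min m n)) (hrange : ∀ n, Set.range (r n) = s '' Set.Iic n)
    (hfix : ∀ n, ∀ k ≤ n, r n (s k) = s k) (k : ℕ) (z : FreeSpace M base) :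
    (Q (k + 1) - Q k) z ∈
      Submodule.span ℝ {(Q (k + 1) - Q k) (freeDeltaF M base (s (k + 1)))} := by
  refine FreeSpace.apply_mem_of_forall_freeDeltaF _ (Submodule.closed_of_finiteDimensional _)
    (fun y => ?_) z
  obtain ⟨j, hj, hy⟩ := exists_retraction_eq hrange (k + 1) y
  have hPQ : (Q (k + 1) - Q k) * Q (k + 1) = Q (k + 1) - Q k := by
    rw [sub_mul (Q (k + 1)) (Q k) (Q (k + 1)), hmul, hmul, min_self, min_eq_left k.le_succ]
  have hPy : (Q (k + 1) - Q k) (freeDeltaF M base y) =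
      (Q (k + 1) - Q k) (freeDeltaF M base (s j)) := by
    rw [← hy, ← hQ, ← mul_apply_eq_comp, hPQ]
  rcases hj.lt_or_eq with hjk | rfl
  · have hPj : (Q (k + 1) - Q k) (freeDeltaF M base (s j)) = 0 := by
      rw [sub_apply, hQ, hQ, hfix _ _ hj, hfix _ _ (Nat.lt_succ_iff.mp hjk), sub_self]
    rw [hPy, hPj]
    exact Submodule.zero_mem _
  · rw [hPy]
    exact Submodule.mem_span_singleton_self _

end Retractions

theorem freeSpace_hasMonotoneSchauderBasis_of_retractions_general
    (M : Type*) [MetricSpace M] (base : M)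
    (s : ℕ → M) (hs0 : s 0 = base) (hinj : Function.Injective s) (hdense : DenseRange s)
    (r : ℕ → M → M)
    (hlip : ∀ n : ℕ, LipschitzWith 1 (r n))
    (hrange : ∀ n : ℕ, Set.range (r n) = s '' Set.Iic n)
    (hfix : ∀ n : ℕ, ∀ k ≤ n, r n (s k) = s k)
    (hcomp : ∀ n : ℕ, r n ∘ r (n + 1) = r n) :
    HasMonotoneSchauderBasis (FreeSpace M base) := by
  have hbase : ∀ n, r n base = base := fun n => hs0 ▸ hfix n 0 n.zero_le
  set Q := fun n => FreeSpace.map (r n) (hlip n) (hbase n)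
  have hQ : ∀ n x, Q n (freeDeltaF M base x) = freeDeltaF M base (r n x) :=
    fun n => FreeSpace.map_freeDeltaF (r n) (hlip n) (hbase n)
  have hnorm : ∀ n x, ‖Q n x‖ ≤ ‖x‖ := fun n x => by
    simpa using FreeSpace.norm_map_apply_le (r n) (hlip n) (hbase n) x
  have hmul := FreeSpace.mul_eq_min_of_retractions hQ hrange hfix hcomp
  exact hasMonotoneSchauderBasis_of_projections Q
    (fun k => (Q (k + 1) - Q k) (freeDeltaF M base (s (k + 1))))
    (FreeSpace.eq_zero_of_retraction_zero hQ hrange hs0) hnorm dense_span_freeDeltaF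
    (by
      rintro _ ⟨y, rfl⟩
      simp only [hQ]
      exact (continuous_freeDeltaF.tendsto y).comp (tendsto_retraction hlip hfix hdense y))
    hmul
    (FreeSpace.increment_freeDeltaF_ne_zero hQ hrange hfix hinj)
    (fun k => by rw [← mul_apply_eq_comp, sub_mul_sub_of_mul_eq_min hmul, if_pos rfl])
    (FreeSpace.increment_mem_span hQ hmul hrange hfix)

/-- **(Lemma `l:sufficientSchauderBasis`).** Let `M` be a separable pointed metric space,
`(sₙ)` a one-to-one dense sequence with `s 0 = base`, and `(rₙ)` a sequence of maps such
that each `rₙ` is a `1`-Lipschitz retraction of `M` onto `{s 0, …, s n}` and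
`rₙ ∘ r_{n+1} = rₙ`. Then the Lipschitz-free space `F(M)` has a monotone Schauder basis. -/
theorem freeSpace_hasMonotoneSchauderBasis_of_retractions
    (M : Type*) [MetricSpace M] [TopologicalSpace.SeparableSpace M] (base : M)
    (s : ℕ → M) (hs0 : s 0 = base) (hinj : Function.Injective s) (hdense : DenseRange s)
    (r : ℕ → M → M)
    (hlip : ∀ n : ℕ, LipschitzWith 1 (r n))
    (hrange : ∀ n : ℕ, Set.range (r n) = s '' Set.Iic n)
    (hfix : ∀ n : ℕ, ∀ k ≤ n, r n (s k) = s k)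
    (hcomp : ∀ n : ℕ, r n ∘ r (n + 1) = r n) :
    HasMonotoneSchauderBasis (FreeSpace M base) :=
  freeSpace_hasMonotoneSchauderBasis_of_retractions_general M base s hs0 hinj hdense r hlip hrange
    hfix hcomp

end
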